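/- Under the balanced random effects model, the mean squared prediction error matrix of the BLUP θ̂^B = (1-B)y + B P_X y equals V((1-B)I_m + B P_X), i.e., E[(θ̂^B - θ)(θ̂^B - θ)^T] = V{(1-B)I_m + B P_X}. -/

import Mathlib

/-!
Since `P_X X = X`, the shrinkage matrix `M = (1 - B) I + B P_X` fixes `Xβ`, so the prediction
error is `θ̂ - θ = (M - I) u + M e` and, `u` and `e` being uncorrelated and isotropic, its
second-moment matrix is `A (M - I)(M - I)ᵀ + V M Mᵀ`. As `P_X` is a symmetric idempotent,
`M - I = -B (I - P_X)` and everything lives in the commutative algebra spanned by `I` and `P_X`;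
there `B (B (V + A) - V) = 0`, which is what `B = V / (V + A)` gives, collapses the sum to `V M`.
-/

open Matrix MeasureTheory

noncomputable def projX {m p : ℕ} (X : Matrix (Fin m) (Fin p) ℝ) : Matrix (Fin m) (Fin m) ℝ :=
  X * (Xᵀ * X)⁻¹ * Xᵀ

namespace Matrix

theorem isUnit_of_rank_eq_card {n K : Type*} [Fintype n] [DecidableEq n] [Field K]
    {A : Matrix n n K} (h : A.rank = Fintype.card n) : IsUnit A :=
  mulVec_surjective_iff_isUnit.mp <| LinearMap.range_eq_top.mp <|
    Submodule.eq_top_of_finrank_eq (h.trans (Module.finrank_fintype_fun_eq_card K).symm)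

end Matrix

section LeastSquaresProjection

variable {m p : ℕ} (X : Matrix (Fin m) (Fin p) ℝ)

theorem isUnit_transpose_mul_self_of_rank_eq (hX : X.rank = p) : IsUnit (Xᵀ * X) :=
  isUnit_of_rank_eq_card (by rw [rank_transpose_mul_self, hX, Fintype.card_fin])

theorem isSymm_projX : (projX X).IsSymm := by
  rw [IsSymm]
  simp only [projX, transpose_mul, transpose_transpose, transpose_nonsing_inv, Matrix.mul_assoc]

variable {X}

theorem projX_mul_self (hX : IsUnit (Xᵀ * X)) : projX X * X = X := by
  rw [projX, Matrix.mul_assoc, Matrix.mul_assoc,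
    nonsing_inv_mul _ ((isUnit_iff_isUnit_det _).mp hX), Matrix.mul_one]

theorem isIdempotentElem_projX (hX : IsUnit (Xᵀ * X)) : IsIdempotentElem (projX X) := by
  rw [IsIdempotentElem]
  conv_lhs => arg 2; rw [projX]
  rw [← Matrix.mul_assoc, ← Matrix.mul_assoc, projX_mul_self hX, projX]

end LeastSquaresProjection

section SecondMoment

variable {Ω : Type*} [MeasurableSpace Ω] (P : Measure Ω) {κ : Type*}

noncomputable def secondMoment (z : Ω → κ → ℝ) : Matrix κ κ ℝ :=
  of fun k l => ∫ ω, z ω k * z ω l ∂P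

variable {P}

theorem secondMoment_mulVec [Fintype κ] {ι : Type*} {z : Ω → κ → ℝ}
    (hz : ∀ k, MemLp (fun ω => z ω k) 2 P) (C : Matrix ι κ ℝ) :
    secondMoment P (fun ω => C *ᵥ z ω) = C * secondMoment P z * Cᵀ := by
  ext i j
  have hexpand : ∀ ω, (C *ᵥ z ω) i * (C *ᵥ z ω) j
      = ∑ k, ∑ l, C i k * C j l * (z ω k * z ω l) := fun ω => by
    simp only [mulVec, dotProduct, Finset.sum_mul_sum]
    exact Finset.sum_congr rfl fun k _ => Finset.sum_congr rfl fun l _ => by ring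
  have hint : ∀ k l, Integrable (fun ω => C i k * C j l * (z ω k * z ω l)) P :=
    fun k l => ((hz k).integrable_mul (hz l)).const_mul _
  simp only [secondMoment, of_apply, hexpand]
  rw [integral_finsetSum _ fun k _ => integrable_finsetSum _ fun l _ => hint k l]
  simp_rw [integral_finsetSum _ fun l _ => hint _ l, integral_const_mul, mul_apply,
    Finset.sum_mul, transpose_apply, of_apply]
  rw [Finset.sum_comm]
  exact Finset.sum_congr rfl fun k _ => Finset.sum_congr rfl fun l _ => by ring

theorem secondMoment_sumElim [DecidableEq κ] {u w : Ω → κ → ℝ} {A V : ℝ}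
    (hu : ∀ k l, ∫ ω, u ω k * u ω l ∂P = if k = l then A else 0)
    (hw : ∀ k l, ∫ ω, w ω k * w ω l ∂P = if k = l then V else 0)
    (huw : ∀ k l, ∫ ω, u ω k * w ω l ∂P = 0) :
    secondMoment P (fun ω => Sum.elim (u ω) (w ω)) = fromBlocks (A • 1) 0 0 (V • 1) := by
  ext (k | k) (l | l)
  · simp [secondMoment, hu, one_apply]
  · simp [secondMoment, huw]
  · simp [secondMoment, mul_comm (w _ k), huw]
  · simp [secondMoment, hw, one_apply]

theorem secondMoment_mulVec_add_mulVec [Fintype κ] [DecidableEq κ] {ι : Type*}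
    {u w : Ω → κ → ℝ} {A V : ℝ}
    (hu2 : ∀ k, MemLp (fun ω => u ω k) 2 P) (hw2 : ∀ k, MemLp (fun ω => w ω k) 2 P)
    (hu : ∀ k l, ∫ ω, u ω k * u ω l ∂P = if k = l then A else 0)
    (hw : ∀ k l, ∫ ω, w ω k * w ω l ∂P = if k = l then V else 0)
    (huw : ∀ k l, ∫ ω, u ω k * w ω l ∂P = 0) (C D : Matrix ι κ ℝ) :
    secondMoment P (fun ω => C *ᵥ u ω + D *ᵥ w ω) = A • (C * Cᵀ) + V • (D * Dᵀ) := by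
  have hz : ∀ s, MemLp (fun ω => Sum.elim (u ω) (w ω) s) 2 P := by
    rintro (k | k)
    exacts [hu2 k, hw2 k]
  simp_rw [← fromCols_mulVec_sumElim]
  rw [secondMoment_mulVec hz, secondMoment_sumElim hu hw huw, fromCols_mul_fromBlocks,
    transpose_fromCols, fromCols_mul_fromRows]
  simp

end SecondMoment

section Shrinkage

variable {n : Type*} [Fintype n] [DecidableEq n] {Q : Matrix n n ℝ}

theorem shrinkage_mse_identity (hQ : Q.IsSymm) (hQQ : IsIdempotentElem Q) {A V B : ℝ}
    (hB : B = V / (V + A)) {M : Matrix n n ℝ} (hM : M = (1 - B) • 1 + B • Q) :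
    A • ((M - 1) * (M - 1)ᵀ) + V • (M * Mᵀ) = V • M := by
  have hB' : B * (B * (V + A) - V) = 0 := by
    rcases eq_or_ne (V + A) 0 with h | h
    · simp [hB, h] -- `V / 0 = 0`, so `B = 0`
    · rw [hB, div_mul_cancel₀ _ h, sub_self, mul_zero]
  subst hM
  simp only [transpose_sub, transpose_add, transpose_smul, transpose_one, hQ.eq, Matrix.sub_mul,
    Matrix.mul_sub, Matrix.add_mul, Matrix.mul_add, Matrix.smul_mul, Matrix.mul_smul,
    Matrix.one_mul, Matrix.mul_one, hQQ.eq, smul_sub, smul_add, smul_smul]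
  match_scalars
  · linear_combination hB'
  · linear_combination -hB'

end Shrinkage

theorem statement2_general {m p : ℕ} (X : Matrix (Fin m) (Fin p) ℝ) (hX : X.rank = p)
    (A V : ℝ)
    {Ω : Type*} [MeasurableSpace Ω] (P : Measure Ω)
    (u e : Ω → Fin m → ℝ) (β : Fin p → ℝ)
    (hu2 : ∀ i, MemLp (fun ω => u ω i) 2 P)
    (he2 : ∀ i, MemLp (fun ω => e ω i) 2 P)
    (hcovu : ∀ i j, ∫ ω, u ω i * u ω j ∂P = if i = j then A else 0)
    (hcove : ∀ i j, ∫ ω, e ω i * e ω j ∂P = if i = j then V else 0)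
    (hcovue : ∀ i j, ∫ ω, u ω i * e ω j ∂P = 0)
    (θ : Ω → Fin m → ℝ) (hθ : ∀ ω, θ ω = X.mulVec β + u ω)
    (y : Ω → Fin m → ℝ) (hy : ∀ ω, y ω = θ ω + e ω)
    (B : ℝ) (hB : B = V / (V + A))
    (θhat : Ω → Fin m → ℝ)
    (hθhat : ∀ ω, θhat ω =
      ((1 - B) • (1 : Matrix (Fin m) (Fin m) ℝ) + B • projX X).mulVec (y ω)) :
    ∀ i j, ∫ ω, (θhat ω i - θ ω i) * (θhat ω j - θ ω j) ∂P
      = (V • ((1 - B) • (1 : Matrix (Fin m) (Fin m) ℝ) + B • projX X)) i j := by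
  set M := (1 - B) • (1 : Matrix (Fin m) (Fin m) ℝ) + B • projX X with hM
  have hXtX := isUnit_transpose_mul_self_of_rank_eq X hX
  have hMX : M * X = X := by
    rw [hM, Matrix.add_mul, smul_mul, smul_mul, Matrix.one_mul, projX_mul_self hXtX, ← add_smul,
      sub_add_cancel, one_smul]
  have herror : ∀ ω, θhat ω - θ ω = (M - 1) *ᵥ u ω + M *ᵥ e ω := fun ω => by
    rw [hθhat, hy, hθ, mulVec_add, mulVec_add, mulVec_mulVec, hMX, sub_mulVec, one_mulVec]
    abel
  have hmse : secondMoment P (fun ω => θhat ω - θ ω) = V • M := by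
    simp_rw [herror]
    rw [secondMoment_mulVec_add_mulVec hu2 he2 hcovu hcove hcovue,
      shrinkage_mse_identity (isSymm_projX X) (isIdempotentElem_projX hXtX) hB hM]
  exact fun i j => congr_fun₂ hmse i j

/-- Under the balanced random effects model `y = Xβ + u + e`,
`u ~ (0, A I_m)`, `e ~ (0, V I_m)` uncorrelated, the mean squared prediction error matrix
of the BLUP `θ̂^B = (1-B) y + B P_X y` (with `B = V/(V+A)`) equals `V((1-B) I_m + B P_X)`. -/
theorem statement2 {m p : ℕ} (hpm : p < m) (X : Matrix (Fin m) (Fin p) ℝ) (hX : X.rank = p)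
    (A V : ℝ) (hA : 0 < A) (hV : 0 < V)
    {Ω : Type*} [MeasurableSpace Ω] (P : Measure Ω) [IsProbabilityMeasure P]
    (u e : Ω → Fin m → ℝ) (β : Fin p → ℝ)
    (hu2 : ∀ i, MemLp (fun ω => u ω i) 2 P)
    (he2 : ∀ i, MemLp (fun ω => e ω i) 2 P)
    (hu0 : ∀ i, ∫ ω, u ω i ∂P = 0)
    (he0 : ∀ i, ∫ ω, e ω i ∂P = 0)
    (hcovu : ∀ i j, ∫ ω, u ω i * u ω j ∂P = if i = j then A else 0)
    (hcove : ∀ i j, ∫ ω, e ω i * e ω j ∂P = if i = j then V else 0)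
    (hcovue : ∀ i j, ∫ ω, u ω i * e ω j ∂P = 0)
    (θ : Ω → Fin m → ℝ) (hθ : ∀ ω, θ ω = X.mulVec β + u ω)
    (y : Ω → Fin m → ℝ) (hy : ∀ ω, y ω = θ ω + e ω)
    (B : ℝ) (hB : B = V / (V + A))
    (θhat : Ω → Fin m → ℝ)
    (hθhat : ∀ ω, θhat ω =
      ((1 - B) • (1 : Matrix (Fin m) (Fin m) ℝ) + B • projX X).mulVec (y ω)) :
    ∀ i j, ∫ ω, (θhat ω i - θ ω i) * (θhat ω j - θ ω j) ∂P
      = (V • ((1 - B) • (1 : Matrix (Fin m) (Fin m) ℝ) + B • projX X)) i j :=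
  statement2_general X hX A V P u e β hu2 he2 hcovu hcove hcovue θ hθ y hy B hB θhat hθhat
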